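/- Suppose real numbers μ, a_1, …, a_14 are such that the 8 × 8 symmetric matrix G(μ, a_1, …, a_14) has rank at most 3, 0.6 ≤ μ ≤ 0.64759, and |a_j| < μ for all 1 ≤ j ≤ 14. Then a_12² = a_6². -/

import Mathlib

/-!
Rank at most `3` kills every `4 × 4` minor. The principal minors on rows `{3, 4, 6, 7}` and
`{2, 3, 6, 7}` equal `(1 - a₉²)(1 - x²) - 4μ²(1 - μ²)` with `x = a₁₂` and `x = a₆` respectively,
so `(1 - a₉²)(a₁₂² - a₆²) = 0`, and `a₉² < μ² < 1`.
-/

/-- The `8 × 8` symmetric matrix `G(μ, a₁, …, a₁₄)` from the paper. -/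
def packingGram (μ a1 a2 a3 a4 a5 a6 a7 a8 a9 a10 a11 a12 a13 a14 : ℝ) :
    Matrix (Fin 8) (Fin 8) ℝ :=
  !![1,  a1,  μ,  a2,  a3, -μ,  a4, -μ;
     a1, 1,  -μ,  a5, -μ,  a6, -μ,  a7;
     μ, -μ,   1,   μ,  a8, -μ,  a9, a10;
     a2, a5,  μ,   1, a11, a12,  μ,   μ;
     a3, -μ, a8, a11,   1,   μ,  μ,  -μ;
     -μ, a6, -μ, a12,   μ,   1,  μ, a13;
     a4, -μ, a9,   μ,   μ,   μ,  1, a14;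
     -μ, a7, a10,  μ,  -μ, a13, a14,  1]

theorem Matrix.det_submatrix_eq_zero_of_rank_lt {K m n k : Type*} [Field K] [Fintype n]
    [Fintype k] [DecidableEq k] (A : Matrix m n K) (r : k → m) (c : k → n)
    (hA : A.rank < Fintype.card k) : (A.submatrix r c).det = 0 := by
  by_contra hdet
  have hunit : IsUnit (A.submatrix r c) :=
    (Matrix.isUnit_iff_isUnit_det _).mpr (Ne.isUnit hdet)
  have := A.rank_submatrix_le r c
  rw [Matrix.rank_of_isUnit _ hunit] at this
  omega

/-- Both minors of `packingGram` we need have this shape after reordering, one with `μ` replaced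
by `-μ`, to which the determinant is blind. -/
def signedMinor {R : Type*} [Ring R] (μ b c : R) : Matrix (Fin 4) (Fin 4) R :=
  !![1, μ, -μ, b;
     μ, 1, c, μ;
     -μ, c, 1, μ;
     b, μ, μ, 1]

theorem det_signedMinor {R : Type*} [CommRing R] (μ b c : R) :
    (signedMinor μ b c).det = (1 - b ^ 2) * (1 - c ^ 2) - 4 * μ ^ 2 * (1 - μ ^ 2) := by
  rw [signedMinor, Matrix.det_succ_row_zero]
  simp [Fin.sum_univ_succ, Matrix.det_fin_three, Fin.succAbove]
  ring

theorem step4_general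
    (μ a1 a2 a3 a4 a5 a6 a7 a8 a9 a10 a11 a12 a13 a14 : ℝ)
    (hrank : (packingGram μ a1 a2 a3 a4 a5 a6 a7 a8 a9 a10 a11 a12 a13 a14).rank ≤ 3)
    (hμ2 : μ ≤ 0.64759)
    (h9 : |a9| < μ) :
    a12 ^ 2 = a6 ^ 2 := by
  set G := packingGram μ a1 a2 a3 a4 a5 a6 a7 a8 a9 a10 a11 a12 a13 a14
  have minor_eq_zero (f : Fin 4 → Fin 8) : (G.submatrix f f).det = 0 :=
    G.det_submatrix_eq_zero_of_rank_lt f f (by simp only [Fintype.card_fin]; omega)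
  -- rows and columns `{3, 4, 6, 7}` and `{7, 2, 6, 3}` of the paper (indices here start at `0`)
  have hG₁ : G.submatrix ![2, 3, 5, 6] ![2, 3, 5, 6] = signedMinor μ a9 a12 := by
    ext i j; fin_cases i <;> fin_cases j <;> rfl
  have hG₂ : G.submatrix ![6, 1, 5, 2] ![6, 1, 5, 2] = signedMinor (-μ) a9 a6 := by
    ext i j; fin_cases i <;> fin_cases j <;> simp [G, packingGram, signedMinor]
  have d₁ := minor_eq_zero ![2, 3, 5, 6]
  have d₂ := minor_eq_zero ![6, 1, 5, 2]
  rw [hG₁, det_signedMinor] at d₁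
  rw [hG₂, det_signedMinor] at d₂
  have ha9 : a9 ^ 2 < 1 := (sq_lt_one_iff_abs_lt_one a9).mpr (by linarith)
  have hdiff : (1 - a9 ^ 2) * (a12 ^ 2 - a6 ^ 2) = 0 := by linear_combination d₂ - d₁
  linear_combination (mul_eq_zero.mp hdiff).resolve_left (by linarith)

/-- **Step 4.** Under the rank-3 and coherence conditions on `G`, `a₁₂² = a₆²`. -/
theorem step4
    (μ a1 a2 a3 a4 a5 a6 a7 a8 a9 a10 a11 a12 a13 a14 : ℝ)
    (hrank : (packingGram μ a1 a2 a3 a4 a5 a6 a7 a8 a9 a10 a11 a12 a13 a14).rank ≤ 3)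
    (hμ1 : (0.6 : ℝ) ≤ μ) (hμ2 : μ ≤ 0.64759)
    (h1 : |a1| < μ) (h2 : |a2| < μ) (h3 : |a3| < μ) (h4 : |a4| < μ) (h5 : |a5| < μ)
    (h6 : |a6| < μ) (h7 : |a7| < μ) (h8 : |a8| < μ) (h9 : |a9| < μ) (h10 : |a10| < μ)
    (h11 : |a11| < μ) (h12 : |a12| < μ) (h13 : |a13| < μ) (h14 : |a14| < μ) :
    a12 ^ 2 = a6 ^ 2 :=
  step4_general μ a1 a2 a3 a4 a5 a6 a7 a8 a9 a10 a11 a12 a13 a14 hrank hμ2 h9
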